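/- Let ⟨X⟩_{β,Ã} denote the Gibbs expectation at inverse temperature β > 0 for the Hamiltonian H̄_hop(Ã)+H̄_int(Ã), and for φ : Λ → (−π,π] let Ã(φ)_{x,y} := φ_x − φ_y. Then for all x ≠ y in Λ, the Cooper-pair correlation averaged over the gauge-equivalence class of Ã = 0 vanishes: ∫ Π_{z∈Λ} (dφ_z / 2π) ⟨a†_{x,↑} a†_{x,↓} a_{y,↓} a_{y,↑}⟩_{β,Ã(φ)} = 0, where each φ_z is integrated over (−π,π]. -/

import Mathlib

/-!
Shifting `φ_x` by `t` is a gauge transformation, implemented by conjugation with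
`e^{it(n_{x,↑} + n_{x,↓})}`: it multiplies `a_{x,σ}` by `e^{-it}` and `a†_{x,σ}` by `e^{it}`, so it
maps `H̄(Ã(φ))` to `H̄(Ã(φ + t δ_x))` and, for `x ≠ y`, multiplies the Cooper-pair operator by
`e^{2it}`. Hence `⟨P⟩_{β,Ã(φ + t δ_x)} = e^{-2it} ⟨P⟩_{β,Ã(φ)}`. The averaging measure is
invariant under the quarter-turn rotation of the circle variable `φ_x` (`t = π/2` modulo `2π`),
which negates the integrand, so the integral vanishes.
-/

open Complex Matrix
open scoped ComplexOrder

namespace PiFlux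

/-- `2*L ≠ 0` when `L ≠ 0`, so that `ZMod (2*L)` is a finite type. -/
instance instNeZero2L (L : ℕ) [NeZero L] : NeZero (2 * L) :=
  ⟨by have := NeZero.ne L; omega⟩

/-- A site of the periodic hypercubic lattice `Λ = {-L+1,…,L}^d` with periodic
boundary conditions: each coordinate is an element of `ZMod (2*L)`. -/
abbrev Site (L d : ℕ) := Fin d → ZMod (2 * L)

/-- The integer value in `{-L+1,…,L}` of a periodic coordinate. -/
def coordVal (L : ℕ) (z : ZMod (2 * L)) : ℤ := (z.val : ℤ) - (L : ℤ) + 1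

/-- The coordinate sum `x⁽¹⁾ + ⋯ + x⁽ᵈ⁾` of a site. -/
def coordSum (L d : ℕ) (x : Site L d) : ℤ := ∑ i, coordVal L (x i)

/-- `x + e_i`, with the periodic identification `L + 1 ≡ -L + 1`. -/
def shift (L d : ℕ) (i : Fin d) (x : Site L d) : Site L d :=
  Function.update x i (x i + 1)

/-- `θ_i(x) := x⁽¹⁾ + ⋯ + x⁽ⁱ⁻¹⁾`, plus `1` if `x⁽ⁱ⁾ = L`  (for the first
direction the sum is empty, so `θ_1(x)` is the indicator of `x⁽¹⁾ = L`). -/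
def theta (L d : ℕ) (i : Fin d) (x : Site L d) : ℤ :=
  (∑ k ∈ Finset.univ.filter (fun k => k < i), coordVal L (x k))
    + (if coordVal L (x i) = (L : ℤ) then 1 else 0)

/-- A classical U(1) gauge field: the real number `Ã_{x,x+e_i}` attached to the
positively oriented bond from `x` to `x + e_i`; the value on the reversed bond
is `Ã_{x+e_i,x} = -Ã_{x,x+e_i}`. -/
abbrev Gauge (L d : ℕ) := Site L d → Fin d → ℝ

/-- The canonical anticommutation relations for the fermion operators
`a x σ` (with `σ : Bool`; `true` = spin up, `false` = spin down). -/
def CAR {L d : ℕ} {F : Type*} [Fintype F] [DecidableEq F]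
    (a : Site L d → Bool → Matrix F F ℂ) : Prop :=
  (∀ x y σ τ, a x σ * (a y τ)ᴴ + (a y τ)ᴴ * a x σ
      = if x = y ∧ σ = τ then (1 : Matrix F F ℂ) else 0) ∧
  (∀ x y σ τ, a x σ * a y τ + a y τ * a x σ = 0)

variable {F : Type*} [Fintype F] [DecidableEq F]

/-- The gauged BCS interaction Hamiltonian `H̄_int(Ã)` (the `+g` convention),
the sum running over the nearest-neighbour bonds `{x, x+e_i}` of `Λ`. -/
noncomputable def HbarInt (L d : ℕ) [NeZero L] (g : ℝ) (A : Gauge L d)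
    (a : Site L d → Bool → Matrix F F ℂ) : Matrix F F ℂ :=
  (g : ℂ) • ∑ x : Site L d, ∑ i : Fin d,
    (Complex.exp (2 * I * (A x i)) •
        ((a x true)ᴴ * (a x false)ᴴ * a (shift L d i x) false * a (shift L d i x) true)
      + Complex.exp (-(2 * I * (A x i))) •
        ((a (shift L d i x) true)ᴴ * (a (shift L d i x) false)ᴴ * a x false * a x true))

/-- The hopping Hamiltonian `H̄_hop(Ã)` in the π-flux form. -/
noncomputable def HbarHop (L d : ℕ) [NeZero L] (κ : ℝ) (A : Gauge L d)
    (a : Site L d → Bool → Matrix F F ℂ) : Matrix F F ℂ :=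
  (I * (κ : ℂ)) • ∑ σ : Bool, ∑ x : Site L d, ∑ i : Fin d,
    ((-1 : ℂ) ^ (theta L d i x)) •
      (Complex.exp (I * (A x i)) • ((a x σ)ᴴ * a (shift L d i x) σ)
        - Complex.exp (-(I * (A x i))) • ((a (shift L d i x) σ)ᴴ * a x σ))

/-- The spin-`σ` part `H̄_hop,σ(Ã)` of the hopping Hamiltonian. -/
noncomputable def HbarHopSpin (L d : ℕ) [NeZero L] (κ : ℝ) (A : Gauge L d)
    (a : Site L d → Bool → Matrix F F ℂ) (σ : Bool) : Matrix F F ℂ :=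
  (I * (κ : ℂ)) • ∑ x : Site L d, ∑ i : Fin d,
    ((-1 : ℂ) ^ (theta L d i x)) •
      (Complex.exp (I * (A x i)) • ((a x σ)ᴴ * a (shift L d i x) σ)
        - Complex.exp (-(I * (A x i))) • ((a (shift L d i x) σ)ᴴ * a x σ))

/-- The Cooper-pair operator `a†_{x,↑} a†_{x,↓} a_{y,↓} a_{y,↑}`. -/
noncomputable def pairOp (L d : ℕ) (a : Site L d → Bool → Matrix F F ℂ)
    (x y : Site L d) : Matrix F F ℂ :=
  (a x true)ᴴ * (a x false)ᴴ * a y false * a y true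

/-- The Gibbs expectation `⟨X⟩_{β,Ã}` at inverse temperature `β` for the
Hamiltonian `H̄_hop(Ã) + H̄_int(Ã)`. -/
noncomputable def gibbs (L d : ℕ) [NeZero L] (β κ g : ℝ) (A : Gauge L d)
    (a : Site L d → Bool → Matrix F F ℂ) (X : Matrix F F ℂ) : ℂ :=
  Matrix.trace (X * NormedSpace.exp
      ((-(β : ℂ)) • (HbarHop L d κ A a + HbarInt L d g A a)))
    / Matrix.trace (NormedSpace.exp
      ((-(β : ℂ)) • (HbarHop L d κ A a + HbarInt L d g A a)))

/-- The pure-gauge field `Ã_{x,y} = φ_x - φ_y`. -/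
def pureGauge (L d : ℕ) (φ : Site L d → ℝ) : Gauge L d :=
  fun x i => φ x - φ (shift L d i x)

open MeasureTheory

theorem _root_.MeasureTheory.MeasurePreserving.integral_eq_zero_of_comp_eq_neg {α E : Type*}
    [MeasurableSpace α] [NormedAddCommGroup E] [NormedSpace ℝ E] {μ : Measure α} {T : α → α}
    (hT : MeasurePreserving T μ μ) {f : α → E} (hf : ∀ a, f (T a) = -f a) :
    ∫ a, f a ∂μ = 0 := by
  have : IsAddTorsionFree E := .of_isTorsionFree ℝ E
  by_cases hm : AEStronglyMeasurable f μ
  · have h := integral_map hT.aemeasurable (hT.map_eq ▸ hm)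
    simp only [hT.map_eq, hf, integral_neg] at h
    exact self_eq_neg.mp h
  · exact integral_non_aestronglyMeasurable hm

theorem _root_.MeasureTheory.measurePreserving_update_apply {ι α : Type*} [Fintype ι]
    [DecidableEq ι] [MeasurableSpace α] {μ : Measure α} [SigmaFinite μ] {r : α → α}
    (hr : MeasurePreserving r μ μ) (i : ι) :
    MeasurePreserving (fun φ : ι → α => Function.update φ i (r (φ i)))
      (Measure.pi fun _ => μ) (Measure.pi fun _ => μ) := by
  have hf : ∀ j, MeasurePreserving (Function.update (fun _ : ι => (id : α → α)) i r j) μ μ := by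
    intro j
    by_cases h : j = i
    · subst h
      simpa using hr
    · simpa [h] using MeasurePreserving.id μ
  convert measurePreserving_pi _ _ hf using 1
  funext φ j
  by_cases h : j = i <;> simp [h]

/-- On `(a, a + p]`, `s ↦ toIocMod hp a (s + t)` is the rotation by `t` of the circle `ℝ / pℤ`. -/
theorem _root_.measurePreserving_toIocMod_add {p : ℝ} (hp : 0 < p) (a t : ℝ) :
    MeasurePreserving (fun s => toIocMod hp a (s + t))
      (volume.restrict (Set.Ioc a (a + p))) (volume.restrict (Set.Ioc a (a + p))) := by
  have : Fact (0 < p) := ⟨hp⟩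
  have h := (measurePreserving_subtype_coe measurableSet_Ioc).comp
    ((AddCircle.measurePreserving_equivIoc p (a := a)).comp
      ((measurePreserving_add_right volume (t : AddCircle p)).comp
        (AddCircle.measurePreserving_mk p a)))
  convert h using 1
  funext s
  simp only [Function.comp_apply, ← QuotientAddGroup.mk_add, AddCircle.equivIoc,
    QuotientAddGroup.equivIocMod_coe]

theorem _root_.Complex.exp_neg_two_mul_I_toIocMod_quarter_sub (a s : ℝ) :
    exp (-(2 * I * ↑(toIocMod Real.two_pi_pos a (s + Real.pi / 2) - s))) = -1 := by
  rw [← self_sub_toIocDiv_zsmul, zsmul_eq_mul]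
  set n := toIocDiv Real.two_pi_pos a (s + Real.pi / 2)
  have h : -(2 * I * ((s + Real.pi / 2 - n * (2 * Real.pi) - s : ℝ) : ℂ))
      = ((2 * n : ℤ) : ℂ) * (2 * Real.pi * I) - Real.pi * I := by
    push_cast; ring
  rw [h, exp_sub, exp_int_mul_two_pi_mul_I, exp_pi_mul_I, one_div_neg_one_eq_neg_one]

section InnerAut

variable (R : Type*) {A : Type*} [CommSemiring R] [Semiring A] [Algebra R A]

noncomputable def innerAut (u : Aˣ) : A ≃ₐ[R] A :=
  MulSemiringAction.toAlgEquiv R A (ConjAct.toConjAct u)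

theorem innerAut_apply (u : Aˣ) (X : A) : innerAut R u X = u * X * ↑u⁻¹ :=
  ConjAct.units_smul_def _ _

theorem innerAut_mul_apply (u v : Aˣ) (X : A) :
    innerAut R (u * v) X = innerAut R u (innerAut R v X) := by
  simp only [innerAut_apply, Units.val_mul, _root_.mul_inv_rev, mul_assoc]

end InnerAut

section FermionAlgebra

variable {L d : ℕ} {a : Site L d → Bool → Matrix F F ℂ}

namespace CAR

theorem mul_self (h : CAR a) (z : Site L d) (σ : Bool) : a z σ * a z σ = 0 := by
  have h2 : (2 : ℂ) • (a z σ * a z σ) = 0 := by rw [two_smul]; exact h.2 z z σ σ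
  exact (smul_eq_zero.mp h2).resolve_left two_ne_zero

theorem conjTranspose_mul_conjTranspose_self (h : CAR a) (z : Site L d) (σ : Bool) :
    (a z σ)ᴴ * (a z σ)ᴴ = 0 := by
  rw [← conjTranspose_mul, h.mul_self, conjTranspose_zero]

theorem mul_conjTranspose_self (h : CAR a) (z : Site L d) (σ : Bool) :
    a z σ * (a z σ)ᴴ = 1 - (a z σ)ᴴ * a z σ := by
  rw [eq_sub_iff_add_eq, h.1, if_pos ⟨rfl, rfl⟩]

theorem mul_conjTranspose_of_ne (h : CAR a) {z y : Site L d} {τ σ : Bool}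
    (hne : ¬(z = y ∧ τ = σ)) : a z τ * (a y σ)ᴴ = -((a y σ)ᴴ * a z τ) := by
  rw [eq_neg_iff_add_eq_zero, h.1, if_neg hne]

theorem mul_anticomm (h : CAR a) (z y : Site L d) (τ σ : Bool) :
    a z τ * a y σ = -(a y σ * a z τ) :=
  eq_neg_of_add_eq_zero_left (h.2 z y τ σ)

theorem conjTranspose_mul_anticomm (h : CAR a) (z y : Site L d) (τ σ : Bool) :
    (a z τ)ᴴ * (a y σ)ᴴ = -((a y σ)ᴴ * (a z τ)ᴴ) := by
  rw [← conjTranspose_mul, ← conjTranspose_mul, h.mul_anticomm, conjTranspose_neg]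

end CAR

noncomputable def numOp (a : Site L d → Bool → Matrix F F ℂ) (x : Site L d) (σ : Bool) :
    Matrix F F ℂ :=
  (a x σ)ᴴ * a x σ

namespace CAR

theorem mul_numOp (h : CAR a) (x : Site L d) (σ : Bool) : a x σ * numOp a x σ = a x σ := by
  rw [numOp, ← mul_assoc, h.mul_conjTranspose_self, sub_mul, mul_assoc, h.mul_self,
    mul_zero, sub_zero, one_mul]

theorem numOp_mul (h : CAR a) (x : Site L d) (σ : Bool) : numOp a x σ * a x σ = 0 := by
  rw [numOp, mul_assoc, h.mul_self, mul_zero]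

theorem numOp_mul_conjTranspose (h : CAR a) (x : Site L d) (σ : Bool) :
    numOp a x σ * (a x σ)ᴴ = (a x σ)ᴴ := by
  rw [numOp, mul_assoc, h.mul_conjTranspose_self, mul_sub, ← mul_assoc,
    h.conjTranspose_mul_conjTranspose_self, zero_mul, sub_zero, mul_one]

theorem conjTranspose_mul_numOp (h : CAR a) (x : Site L d) (σ : Bool) :
    (a x σ)ᴴ * numOp a x σ = 0 := by
  rw [numOp, ← mul_assoc, h.conjTranspose_mul_conjTranspose_self, zero_mul]

theorem numOp_mul_self (h : CAR a) (x : Site L d) (σ : Bool) :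
    numOp a x σ * numOp a x σ = numOp a x σ := by
  nth_rw 1 [numOp]
  rw [mul_assoc, h.mul_numOp, numOp]

theorem commute_numOp (h : CAR a) {x z : Site L d} {σ τ : Bool} (hne : ¬(z = x ∧ τ = σ)) :
    Commute (a z τ) (numOp a x σ) := by
  rw [Commute, SemiconjBy, numOp, ← mul_assoc, h.mul_conjTranspose_of_ne hne, neg_mul,
    mul_assoc, h.mul_anticomm z x, mul_neg, neg_neg, mul_assoc]

theorem commute_conjTranspose_numOp (h : CAR a) {x z : Site L d} {σ τ : Bool}
    (hne : ¬(z = x ∧ τ = σ)) : Commute (a z τ)ᴴ (numOp a x σ) := by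
  have hne' : ¬(x = z ∧ σ = τ) := fun h' => hne ⟨h'.1.symm, h'.2.symm⟩
  rw [Commute, SemiconjBy, numOp, ← mul_assoc, h.conjTranspose_mul_anticomm, neg_mul,
    mul_assoc, ← neg_eq_iff_eq_neg.mpr (h.mul_conjTranspose_of_ne hne'), mul_neg, neg_neg,
    mul_assoc]

end CAR

/-- `c ^ n_{x,σ}`, which is `1 + (c - 1) n_{x,σ}` because `n_{x,σ}` is a projection. -/
noncomputable def phaseFactor (a : Site L d → Bool → Matrix F F ℂ) (x : Site L d) (σ : Bool)
    (c : ℂ) : Matrix F F ℂ :=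
  1 + (c - 1) • numOp a x σ

theorem phaseFactor_one (x : Site L d) (σ : Bool) : phaseFactor a x σ 1 = 1 := by
  simp [phaseFactor]

namespace CAR

theorem phaseFactor_mul (h : CAR a) (x : Site L d) (σ : Bool) (c c' : ℂ) :
    phaseFactor a x σ c * phaseFactor a x σ c' = phaseFactor a x σ (c * c') := by
  simp only [phaseFactor, mul_add, add_mul, one_mul, mul_one, smul_mul_smul_comm,
    h.numOp_mul_self]
  module

theorem phaseFactor_mul_self (h : CAR a) (x : Site L d) (σ : Bool) (c : ℂ) :
    phaseFactor a x σ c * a x σ = a x σ := by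
  rw [phaseFactor, add_mul, one_mul, smul_mul_assoc, h.numOp_mul, smul_zero, add_zero]

theorem self_mul_phaseFactor (h : CAR a) (x : Site L d) (σ : Bool) (c : ℂ) :
    a x σ * phaseFactor a x σ c = c • a x σ := by
  rw [phaseFactor, mul_add, mul_one, mul_smul_comm, h.mul_numOp]
  module

theorem phaseFactor_mul_conjTranspose (h : CAR a) (x : Site L d) (σ : Bool) (c : ℂ) :
    phaseFactor a x σ c * (a x σ)ᴴ = c • (a x σ)ᴴ := by
  rw [phaseFactor, add_mul, one_mul, smul_mul_assoc, h.numOp_mul_conjTranspose]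
  module

theorem conjTranspose_mul_phaseFactor (h : CAR a) (x : Site L d) (σ : Bool) (c : ℂ) :
    (a x σ)ᴴ * phaseFactor a x σ c = (a x σ)ᴴ := by
  rw [phaseFactor, mul_add, mul_one, mul_smul_comm, h.conjTranspose_mul_numOp, smul_zero,
    add_zero]

noncomputable def phaseUnit (h : CAR a) (x : Site L d) (σ : Bool) (c : ℂˣ) :
    (Matrix F F ℂ)ˣ where
  val := phaseFactor a x σ c
  inv := phaseFactor a x σ ↑c⁻¹
  val_inv := by rw [h.phaseFactor_mul, Units.mul_inv, phaseFactor_one]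
  inv_val := by rw [h.phaseFactor_mul, Units.inv_mul, phaseFactor_one]

theorem commute_phaseFactor (h : CAR a) {x z : Site L d} {σ τ : Bool}
    (hne : ¬(z = x ∧ τ = σ)) (c : ℂ) : Commute (a z τ) (phaseFactor a x σ c) :=
  (Commute.one_right _).add_right ((h.commute_numOp hne).smul_right _)

theorem commute_conjTranspose_phaseFactor (h : CAR a) {x z : Site L d} {σ τ : Bool}
    (hne : ¬(z = x ∧ τ = σ)) (c : ℂ) : Commute (a z τ)ᴴ (phaseFactor a x σ c) :=
  (Commute.one_right _).add_right ((h.commute_conjTranspose_numOp hne).smul_right _)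

theorem innerAut_phaseUnit_apply (h : CAR a) (x z : Site L d) (σ τ : Bool) (c : ℂˣ) :
    innerAut ℂ (h.phaseUnit x σ c) (a z τ)
      = (if z = x ∧ τ = σ then (↑c⁻¹ : ℂ) else 1) • a z τ := by
  rw [innerAut_apply]
  change phaseFactor a x σ c * a z τ * phaseFactor a x σ ↑c⁻¹ = _
  split_ifs with hz
  · obtain ⟨rfl, rfl⟩ := hz
    rw [h.phaseFactor_mul_self, h.self_mul_phaseFactor]
  · rw [← (h.commute_phaseFactor hz c).eq, mul_assoc, h.phaseFactor_mul, Units.mul_inv,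
      phaseFactor_one, mul_one, one_smul]

theorem innerAut_phaseUnit_apply_conjTranspose (h : CAR a) (x z : Site L d) (σ τ : Bool)
    (c : ℂˣ) : innerAut ℂ (h.phaseUnit x σ c) (a z τ)ᴴ
      = (if z = x ∧ τ = σ then (c : ℂ) else 1) • (a z τ)ᴴ := by
  rw [innerAut_apply]
  change phaseFactor a x σ c * (a z τ)ᴴ * phaseFactor a x σ ↑c⁻¹ = _
  split_ifs with hz
  · obtain ⟨rfl, rfl⟩ := hz
    rw [h.phaseFactor_mul_conjTranspose, smul_mul_assoc, h.conjTranspose_mul_phaseFactor]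
  · rw [← (h.commute_conjTranspose_phaseFactor hz c).eq, mul_assoc, h.phaseFactor_mul,
      Units.mul_inv, phaseFactor_one, mul_one, one_smul]

/-- The gauge rotation `c ^ (n_{x,↑} + n_{x,↓})` at the site `x`. -/
noncomputable def siteUnit (h : CAR a) (x : Site L d) (c : ℂˣ) : (Matrix F F ℂ)ˣ :=
  h.phaseUnit x true c * h.phaseUnit x false c

theorem innerAut_siteUnit_apply (h : CAR a) (x z : Site L d) (τ : Bool) (c : ℂˣ) :
    innerAut ℂ (h.siteUnit x c) (a z τ) = (if z = x then (↑c⁻¹ : ℂ) else 1) • a z τ := by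
  rw [siteUnit, innerAut_mul_apply, h.innerAut_phaseUnit_apply, map_smul,
    h.innerAut_phaseUnit_apply, smul_smul]
  by_cases hz : z = x <;> cases τ <;> simp [hz]

theorem innerAut_siteUnit_apply_conjTranspose (h : CAR a) (x z : Site L d) (τ : Bool)
    (c : ℂˣ) :
    innerAut ℂ (h.siteUnit x c) (a z τ)ᴴ = (if z = x then (c : ℂ) else 1) • (a z τ)ᴴ := by
  rw [siteUnit, innerAut_mul_apply, h.innerAut_phaseUnit_apply_conjTranspose, map_smul,
    h.innerAut_phaseUnit_apply_conjTranspose, smul_smul]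
  by_cases hz : z = x <;> cases τ <;> simp [hz]

end CAR

/-- Conjugation by `u` is the gauge transformation `Ã(φ) ↦ Ã(φ + χ)` of the fermion operators. -/
structure ImplementsGauge (u : (Matrix F F ℂ)ˣ) (a : Site L d → Bool → Matrix F F ℂ)
    (χ : Site L d → ℝ) : Prop where
  annihilation : ∀ z σ, innerAut ℂ u (a z σ) = exp (-(I * χ z)) • a z σ
  creation : ∀ z σ, innerAut ℂ u (a z σ)ᴴ = exp (I * χ z) • (a z σ)ᴴ

theorem CAR.implementsGauge_siteUnit (h : CAR a) (x : Site L d) (t : ℝ) :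
    ImplementsGauge (h.siteUnit x (Units.mk0 (exp (I * t)) (exp_ne_zero _))) a
      (Pi.single x t) := by
  constructor <;> intro z σ
  · rw [h.innerAut_siteUnit_apply]
    by_cases hz : z = x <;> simp [hz, exp_neg]
  · rw [h.innerAut_siteUnit_apply_conjTranspose]
    by_cases hz : z = x <;> simp [hz]

namespace ImplementsGauge

variable {u : (Matrix F F ℂ)ˣ} {χ : Site L d → ℝ}

theorem innerAut_HbarHop [NeZero L] (hu : ImplementsGauge u a χ) (κ : ℝ) (φ : Site L d → ℝ) :
    innerAut ℂ u (HbarHop L d κ (pureGauge L d φ) a)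
      = HbarHop L d κ (pureGauge L d (φ + χ)) a := by
  simp only [HbarHop, map_smul, map_sum, map_sub, map_mul, hu.annihilation, hu.creation,
    smul_mul_smul_comm, smul_smul, Pi.add_apply, pureGauge]
  congr 1
  refine Finset.sum_congr rfl fun σ _ => Finset.sum_congr rfl fun z _ =>
    Finset.sum_congr rfl fun i _ => ?_
  simp only [← exp_add]
  congr 4 <;> push_cast <;> ring

theorem innerAut_HbarInt [NeZero L] (hu : ImplementsGauge u a χ) (g : ℝ) (φ : Site L d → ℝ) :
    innerAut ℂ u (HbarInt L d g (pureGauge L d φ) a)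
      = HbarInt L d g (pureGauge L d (φ + χ)) a := by
  simp only [HbarInt, map_smul, map_sum, map_add, map_mul, hu.annihilation, hu.creation,
    smul_mul_smul_comm, smul_smul, Pi.add_apply, pureGauge]
  congr 1
  refine Finset.sum_congr rfl fun z _ => Finset.sum_congr rfl fun i _ => ?_
  simp only [← exp_add]
  congr 3 <;> push_cast <;> ring

theorem innerAut_pairOp (hu : ImplementsGauge u a χ) (x y : Site L d) :
    innerAut ℂ u (pairOp L d a x y) = exp (2 * I * (χ x - χ y)) • pairOp L d a x y := by
  simp only [pairOp, map_mul, hu.annihilation, hu.creation, smul_mul_smul_comm,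
    ← exp_add]
  congr 2
  ring

end ImplementsGauge

theorem gibbs_smul [NeZero L] (β κ g : ℝ) (A : Gauge L d) (c : ℂ) (X : Matrix F F ℂ) :
    gibbs L d β κ g A a (c • X) = c * gibbs L d β κ g A a X := by
  rw [gibbs, gibbs, smul_mul_assoc, trace_smul, smul_eq_mul, mul_div_assoc]

theorem gibbs_innerAut [NeZero L] (β κ g : ℝ) {A A' : Gauge L d} (u : (Matrix F F ℂ)ˣ)
    (hH : innerAut ℂ u (HbarHop L d κ A a + HbarInt L d g A a)
      = HbarHop L d κ A' a + HbarInt L d g A' a) (X : Matrix F F ℂ) :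
    gibbs L d β κ g A' a (innerAut ℂ u X) = gibbs L d β κ g A a X := by
  have hexp (Y : Matrix F F ℂ) :
      NormedSpace.exp (innerAut ℂ u Y) = innerAut ℂ u (NormedSpace.exp Y) := by
    simp only [innerAut_apply, Matrix.exp_units_conj]
  rw [gibbs, gibbs, ← hH, ← map_smul, hexp, ← map_mul, innerAut_apply, innerAut_apply,
    trace_units_conj, trace_units_conj]

theorem ImplementsGauge.gibbs_pairOp [NeZero L] {u : (Matrix F F ℂ)ˣ} {χ : Site L d → ℝ}
    (hu : ImplementsGauge u a χ) (β κ g : ℝ) (φ : Site L d → ℝ) (x y : Site L d) :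
    gibbs L d β κ g (pureGauge L d (φ + χ)) a (pairOp L d a x y)
      = exp (-(2 * I * (χ x - χ y)))
        * gibbs L d β κ g (pureGauge L d φ) a (pairOp L d a x y) := by
  have h := gibbs_innerAut β κ g (A := pureGauge L d φ) u
    (by rw [map_add, hu.innerAut_HbarHop, hu.innerAut_HbarInt]) (pairOp L d a x y)
  rw [hu.innerAut_pairOp, gibbs_smul] at h
  rw [← h, ← mul_assoc, ← exp_add, neg_add_cancel, exp_zero, one_mul]

theorem CAR.gibbs_pairOp_add_single [NeZero L] (h : CAR a) (β κ g : ℝ) (φ : Site L d → ℝ)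
    {x y : Site L d} (hxy : x ≠ y) (t : ℝ) :
    gibbs L d β κ g (pureGauge L d (φ + Pi.single x t)) a (pairOp L d a x y)
      = exp (-(2 * I * t)) * gibbs L d β κ g (pureGauge L d φ) a (pairOp L d a x y) := by
  rw [(h.implementsGauge_siteUnit x t).gibbs_pairOp]
  simp [hxy.symm]

end FermionAlgebra

theorem averaged_cooper_pair_correlation_vanishes_general (L d : ℕ) [NeZero L]
    {F : Type*} [Fintype F] [DecidableEq F]
    (a : Site L d → Bool → Matrix F F ℂ) (hCAR : CAR a)
    (κ g : ℝ) (β : ℝ)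
    (x y : Site L d) (hxy : x ≠ y) :
    ∫ φ : Site L d → ℝ,
        (∏ _z : Site L d, (1 / (2 * (Real.pi : ℂ)))) *
          gibbs L d β κ g (pureGauge L d φ) a (pairOp L d a x y)
      ∂(Measure.pi fun _ : Site L d =>
          volume.restrict (Set.Ioc (-Real.pi) Real.pi)) = 0 := by
  set r : ℝ → ℝ := fun s => toIocMod Real.two_pi_pos (-Real.pi) (s + Real.pi / 2)
  have hr : MeasurePreserving r (volume.restrict (Set.Ioc (-Real.pi) Real.pi))
      (volume.restrict (Set.Ioc (-Real.pi) Real.pi)) := by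
    simpa [show -Real.pi + 2 * Real.pi = Real.pi by ring]
      using measurePreserving_toIocMod_add Real.two_pi_pos (-Real.pi) (Real.pi / 2)
  refine (measurePreserving_update_apply hr x).integral_eq_zero_of_comp_eq_neg fun φ => ?_
  have hupd : Function.update φ x (r (φ x)) = φ + Pi.single x (r (φ x) - φ x) := by
    ext z
    by_cases hz : z = x <;> simp [hz]
  rw [hupd, hCAR.gibbs_pairOp_add_single β κ g φ hxy, exp_neg_two_mul_I_toIocMod_quarter_sub]
  ring

/-- The Cooper-pair correlation averaged over the
gauge-equivalence class of `Ã = 0` vanishes for `x ≠ y`: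
`∫ Π_z (dφ_z/2π) ⟨a†_{x,↑}a†_{x,↓}a_{y,↓}a_{y,↑}⟩_{β,Ã(φ)} = 0`,
each `φ_z` being integrated over `(-π, π]`. -/
theorem averaged_cooper_pair_correlation_vanishes (L d : ℕ) [NeZero L] (hd : 3 ≤ d)
    {F : Type*} [Fintype F] [DecidableEq F]
    (a : Site L d → Bool → Matrix F F ℂ) (hCAR : CAR a)
    (hcard : Fintype.card F = 2 ^ (2 * Fintype.card (Site L d)))
    (κ g : ℝ) (hg : 0 ≤ g) (β : ℝ) (hβ : 0 < β)
    (x y : Site L d) (hxy : x ≠ y) :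
    ∫ φ : Site L d → ℝ,
        (∏ _z : Site L d, (1 / (2 * (Real.pi : ℂ)))) *
          gibbs L d β κ g (pureGauge L d φ) a (pairOp L d a x y)
      ∂(Measure.pi fun _ : Site L d =>
          volume.restrict (Set.Ioc (-Real.pi) Real.pi)) = 0 :=
  averaged_cooper_pair_correlation_vanishes_general L d a hCAR κ g β x y hxy

end PiFlux
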